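/- arXiv:1902.04746 — 2 statements merged into one kernel-verified Lean document; each statement's English description precedes it below -/
import Mathlib

section
/- For every real x > 1/2 and every real y, the alternating series Σ_{n=1}^∞ (−1)^n n^{−x} sin(y · log n) converges. -/
open Filter Finset Real

private noncomputable def Haux (x y t : ℝ) : ℝ := t ^ (-x) * Real.sin (y * Real.log t)

private lemma hasDerivAt_Haux (x y : ℝ) {t : ℝ} (ht : 0 < t) :
    HasDerivAt (Haux x y)
      ((-x) * t ^ (-x - 1) * Real.sin (y * Real.log t)
        + t ^ (-x) * (Real.cos (y * Real.log t) * (y * t⁻¹))) t := by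
  have h1 : HasDerivAt (fun t : ℝ => t ^ (-x)) ((-x) * t ^ (-x - 1)) t :=
    Real.hasDerivAt_rpow_const (Or.inl ht.ne')
  have h3 : HasDerivAt (fun t : ℝ => y * Real.log t) (y * t⁻¹) t :=
    (Real.hasDerivAt_log ht.ne').const_mul y
  have h4 : HasDerivAt (fun t : ℝ => Real.sin (y * Real.log t))
      (Real.cos (y * Real.log t) * (y * t⁻¹)) t := (Real.hasDerivAt_sin _).comp t h3
  exact h1.mul h4

private lemma deriv_bound (x y : ℝ) (hx : 0 < x) {a t : ℝ} (ha : 1 ≤ a) (h1 : a ≤ t)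
    (h2 : t ≤ a + 1) :
    |(-x) * t ^ (-x - 1) * Real.sin (y * Real.log t)
        + t ^ (-x) * (Real.cos (y * Real.log t) * (y * t⁻¹))| ≤ (x + |y|) * a ^ (-x - 1) := by
  have ht : (1:ℝ) ≤ t := ha.trans h1
  have ht0 : (0:ℝ) < t := by linarith
  have key : t ^ (-x) * t⁻¹ = t ^ (-x - 1) := by
    rw [Real.rpow_sub ht0, Real.rpow_one]
    ring
  have hle : t ^ (-x - 1) ≤ a ^ (-x - 1) :=
    Real.rpow_le_rpow_of_nonpos (by linarith) h1 (by linarith)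
  have hpos : (0:ℝ) < t ^ (-x - 1) := Real.rpow_pos_of_pos ht0 _
  calc |(-x) * t ^ (-x - 1) * Real.sin (y * Real.log t)
        + t ^ (-x) * (Real.cos (y * Real.log t) * (y * t⁻¹))|
      ≤ |(-x) * t ^ (-x - 1) * Real.sin (y * Real.log t)|
        + |t ^ (-x) * (Real.cos (y * Real.log t) * (y * t⁻¹))| := abs_add_le _ _
    _ ≤ x * t ^ (-x - 1) + |y| * t ^ (-x - 1) := by
        gcongr
        · rw [abs_mul, abs_mul, abs_neg, abs_of_nonneg hx.le, abs_of_nonneg hpos.le]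
          have h5 := Real.abs_sin_le_one (y * Real.log t)
          calc x * t ^ (-x - 1) * |Real.sin (y * Real.log t)|
              ≤ x * t ^ (-x - 1) * 1 :=
                mul_le_mul_of_nonneg_left h5 (mul_nonneg hx.le hpos.le)
            _ = x * t ^ (-x - 1) := mul_one _
        · rw [show t ^ (-x) * (Real.cos (y * Real.log t) * (y * t⁻¹))
              = (Real.cos (y * Real.log t) * y) * (t ^ (-x) * t⁻¹) by ring, key, abs_mul,
            abs_of_nonneg hpos.le, abs_mul]
          have h6 := Real.abs_cos_le_one (y * Real.log t)
          calc |Real.cos (y * Real.log t)| * |y| * (t ^ (-x - 1))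
              ≤ 1 * |y| * (t ^ (-x - 1)) := by
                apply mul_le_mul_of_nonneg_right _ hpos.le
                exact mul_le_mul_of_nonneg_right h6 (abs_nonneg y)
            _ = |y| * t ^ (-x - 1) := by ring
    _ = (x + |y|) * t ^ (-x - 1) := by ring
    _ ≤ (x + |y|) * a ^ (-x - 1) := by
        have hxy : (0:ℝ) ≤ x + |y| := by positivity
        nlinarith

private lemma pair_bound (x y : ℝ) (hx : 0 < x) {a : ℝ} (ha : 1 ≤ a) :
    |Haux x y (a + 1) - Haux x y a| ≤ (x + |y|) * a ^ (-x - 1) := by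
  have hconv : Convex ℝ (Set.Icc a (a + 1)) := convex_Icc _ _
  have := hconv.norm_image_sub_le_of_norm_hasDerivWithin_le
    (f := Haux x y)
    (f' := fun t => (-x) * t ^ (-x - 1) * Real.sin (y * Real.log t)
        + t ^ (-x) * (Real.cos (y * Real.log t) * (y * t⁻¹)))
    (C := (x + |y|) * a ^ (-x - 1))
    (fun t ht => (hasDerivAt_Haux x y (by have := ht.1; linarith)).hasDerivWithinAt)
    (fun t ht => by rw [Real.norm_eq_abs]; exact deriv_bound x y hx ha ht.1 ht.2)
    (Set.left_mem_Icc.2 (by linarith)) (Set.right_mem_Icc.2 (by linarith))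
  have habs : ‖(a + 1) - a‖ = 1 := by
    rw [Real.norm_eq_abs, show a + 1 - a = 1 by ring, abs_one]
  rw [Real.norm_eq_abs, habs, mul_one] at this
  exact this

/-- For every real `x > 1/2` and real `y`, the alternating series
`Σ_{n≥1} (−1)^n n^{−x} sin(y log n)` converges. -/
theorem stmt_7 (x y : ℝ) (hx : 1 / 2 < x) :
    ∃ L : ℝ, Tendsto (fun N : ℕ => ∑ n ∈ Icc 1 N,
      (-1 : ℝ) ^ n * (n : ℝ) ^ (-x) * Real.sin (y * Real.log n)) atTop (nhds L) := by
  have hx0 : 0 < x := by linarith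
  set f : ℕ → ℝ := fun n => (-1 : ℝ) ^ n * (n : ℝ) ^ (-x) * Real.sin (y * Real.log n) with hf
  set g : ℕ → ℝ := fun m => f (2 * m + 1) + f (2 * m + 2) with hg
  -- each pair equals a Haux difference
  have hpair : ∀ m : ℕ, g m = Haux x y ((2 * m + 1 : ℕ) + 1) - Haux x y (2 * m + 1 : ℕ) := by
    intro m
    have o1 : ((-1:ℝ)) ^ (2 * m + 1) = -1 := Odd.neg_one_pow ⟨m, by ring⟩
    have o2 : ((-1:ℝ)) ^ (2 * m + 2) = 1 := Even.neg_one_pow ⟨m + 1, by ring⟩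
    simp only [hg, hf, o1, o2, Haux]
    push_cast
    ring
  -- summability of paired series
  have hsum : Summable g := by
    have hbase : Summable (fun n : ℕ => (n : ℝ) ^ (-x - 1)) :=
      Real.summable_nat_rpow.2 (by linarith)
    have hshift : Summable (fun n : ℕ => ((n : ℝ) + 1) ^ (-x - 1)) := by
      have := (summable_nat_add_iff 1).2 hbase
      simpa [Nat.cast_add] using this
    apply Summable.of_norm_bounded (g := fun m : ℕ => (x + |y|) * ((m : ℝ) + 1) ^ (-x - 1))
      (hshift.mul_left _)
    intro m
    have hm : (0:ℝ) ≤ (m:ℝ) := Nat.cast_nonneg m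
    have ha : (1:ℝ) ≤ ((2 * m + 1 : ℕ) : ℝ) := by push_cast; linarith
    have h1 := pair_bound x y hx0 ha
    rw [← hpair m] at h1
    have hle : ((2 * m + 1 : ℕ) : ℝ) ^ (-x - 1) ≤ ((m : ℝ) + 1) ^ (-x - 1) :=
      Real.rpow_le_rpow_of_nonpos (by positivity) (by push_cast; linarith) (by linarith)
    have hxy : (0:ℝ) ≤ x + |y| := by positivity
    calc ‖g m‖ = |g m| := rfl
      _ ≤ (x + |y|) * ((2 * m + 1 : ℕ) : ℝ) ^ (-x - 1) := h1
      _ ≤ (x + |y|) * ((m : ℝ) + 1) ^ (-x - 1) := mul_le_mul_of_nonneg_left hle hxy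
  -- partial sum decomposition
  have hdecomp : ∀ N : ℕ, ∑ n ∈ Icc 1 N, f n
      = (∑ m ∈ range (N / 2), g m) + (if Odd N then f N else 0) := by
    intro N
    induction N with
    | zero => simp
    | succ N ih =>
      rw [Finset.sum_Icc_succ_top (by omega : 1 ≤ N + 1), ih]
      rcases Nat.even_or_odd N with he | ho
      · have h2 : (N + 1) / 2 = N / 2 := by
          rcases he with ⟨k, hk⟩; omega
        have hodd : Odd (N + 1) := he.add_one
        have hnotodd : ¬ Odd N := by simpa using he
        rw [h2, if_neg hnotodd, if_pos hodd]
        ring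
      · have h2 : (N + 1) / 2 = N / 2 + 1 := by
          rcases ho with ⟨k, hk⟩; omega
        have hnotodd : ¬ Odd (N + 1) := by simpa using ho.add_one
        rw [h2, if_pos ho, if_neg hnotodd, Finset.sum_range_succ]
        have e1 : 2 * (N / 2) + 1 = N := by rcases ho with ⟨k, hk⟩; omega
        have e2 : 2 * (N / 2) + 2 = N + 1 := by omega
        simp only [hg, e1, e2]
        ring
  -- convergence of paired partial sums
  have hT : Tendsto (fun M : ℕ => ∑ m ∈ range M, g m) atTop (nhds (∑' m, g m)) :=
    hsum.hasSum.tendsto_sum_nat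
  have hdiv : Tendsto (fun N : ℕ => N / 2) atTop atTop :=
    tendsto_atTop_atTop.2 fun b => ⟨2 * b, fun a ha => by omega⟩
  have h1 : Tendsto (fun N : ℕ => ∑ m ∈ range (N / 2), g m) atTop (nhds (∑' m, g m)) :=
    hT.comp hdiv
  -- error term tends to zero
  have herr : Tendsto (fun N : ℕ => if Odd N then f N else 0) atTop (nhds 0) := by
    refine squeeze_zero_norm (a := fun N : ℕ => (N : ℝ) ^ (-x)) ?_ ?_
    · intro N
      by_cases hN : Odd N
      · rw [if_pos hN]
        simp only [hf, Real.norm_eq_abs, abs_mul, abs_pow, abs_neg, abs_one, one_pow, one_mul]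
        have h5 := Real.abs_sin_le_one (y * Real.log N)
        have h7 : (0:ℝ) ≤ (N:ℝ) ^ (-x) := Real.rpow_nonneg (Nat.cast_nonneg N) _
        rw [abs_of_nonneg h7]
        nlinarith [abs_nonneg (Real.sin (y * Real.log N))]
      · rw [if_neg hN]
        simp [Real.rpow_nonneg (Nat.cast_nonneg N)]
    · exact (tendsto_rpow_neg_atTop hx0).comp tendsto_natCast_atTop_atTop
  refine ⟨∑' m, g m, ?_⟩
  have hfin := h1.add herr
  rw [add_zero] at hfin
  exact hfin.congr fun N => (hdecomp N).symm
end

section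
/- The double series Σ_{n₁ ≠ n₂} (−1)^{n₁+n₂}/(n₁ n₂), summed in Pringsheim's sense (limit of rectangular partial sums), converges to (log 2)² − π²/6. -/
open Filter Finset Real Topology

noncomputable def Sa (p : ℕ) : ℝ := ∑ i ∈ range p, (-1 : ℝ) ^ i * (1 / (i + 1))

lemma Sa_two_mul (m : ℕ) : Sa (2 * m) = (harmonic (2 * m) : ℝ) - harmonic m := by
  induction m with
  | zero => simp [Sa]
  | succ m ih =>
    have h2 : 2 * (m + 1) = (2 * m + 1) + 1 := by ring
    rw [h2, Sa, Finset.sum_range_succ, Finset.sum_range_succ, ← Sa, ih,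
      harmonic_succ (2*m+1), harmonic_succ (2*m), harmonic_succ m]
    push_cast
    have h1 : ((2 * m : ℕ) : ℝ) + 1 + 1 = 2 * (((m : ℝ)) + 1) := by push_cast; ring
    have hm : ((m : ℝ) + 1) ≠ 0 := by positivity
    have hm2 : ((2 * m : ℕ) : ℝ) + 1 ≠ 0 := by positivity
    rw [pow_succ, pow_mul]
    field_simp
    ring

lemma tendsto_two_mul_nat : Tendsto (fun m : ℕ => 2 * m) atTop atTop :=
  tendsto_atTop_mono (fun n => by simp; omega) tendsto_id

lemma tendsto_Sa_two_mul : Tendsto (fun m => Sa (2 * m)) atTop (𝓝 (Real.log 2)) := by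
  have h1 : Tendsto (fun m : ℕ => ((harmonic (2 * m) : ℝ) - Real.log (2 * m)) -
      ((harmonic m : ℝ) - Real.log m) + Real.log 2) atTop (𝓝 (Real.log 2)) := by
    have := ((tendsto_harmonic_sub_log.comp tendsto_two_mul_nat).sub
      tendsto_harmonic_sub_log).add (tendsto_const_nhds (x := Real.log 2))
    simpa using this
  apply h1.congr'
  filter_upwards [eventually_ge_atTop 1] with m hm
  have hm0 : (m : ℝ) ≠ 0 := Nat.cast_ne_zero.mpr (by omega)
  rw [Sa_two_mul]
  rw [Real.log_mul two_ne_zero hm0]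
  ring

lemma tendsto_Sa : Tendsto Sa atTop (𝓝 (Real.log 2)) := by
  have hanti : Antitone (fun i : ℕ => (1 : ℝ) / (i + 1)) := by
    intro a b hab
    have : (a : ℝ) + 1 ≤ (b : ℝ) + 1 := by exact_mod_cast Nat.succ_le_succ hab
    exact one_div_le_one_div_of_le (by positivity) this
  have h0 : Tendsto (fun i : ℕ => (1 : ℝ) / (i + 1)) atTop (𝓝 0) :=
    tendsto_one_div_add_atTop_nhds_zero_nat
  obtain ⟨l, hl⟩ := hanti.tendsto_alternating_series_of_tendsto_zero h0
  have hl' : Tendsto Sa atTop (𝓝 l) := hl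
  have h2 : Tendsto (fun m => Sa (2 * m)) atTop (𝓝 l) :=
    hl'.comp tendsto_two_mul_nat
  rwa [tendsto_nhds_unique h2 tendsto_Sa_two_mul] at hl'

lemma sum_Icc_one (f : ℕ → ℝ) (p : ℕ) : ∑ n ∈ Icc 1 p, f n = ∑ i ∈ range p, f (i + 1) := by
  induction p with
  | zero => simp
  | succ p ih =>
    rw [Finset.sum_Icc_succ_top (by omega), ih, Finset.sum_range_succ]

lemma A_eq (p : ℕ) : ∑ n ∈ Icc 1 p, (-1 : ℝ) ^ n / n = -Sa p := by
  rw [sum_Icc_one, Sa]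
  rw [show -∑ i ∈ range p, (-1 : ℝ) ^ i * (1 / (i + 1)) =
      ∑ i ∈ range p, -((-1 : ℝ) ^ i * (1 / (i + 1))) from (Finset.sum_neg_distrib _).symm]
  refine Finset.sum_congr rfl fun i _ => ?_
  rw [pow_succ]
  push_cast
  ring

lemma tendsto_A : Tendsto (fun p : ℕ => ∑ n ∈ Icc 1 p, (-1 : ℝ) ^ n / n) atTop
    (𝓝 (-Real.log 2)) := by
  simp_rw [A_eq]
  exact tendsto_Sa.neg

lemma tendsto_D : Tendsto (fun m : ℕ => ∑ n ∈ Icc 1 m, 1 / ((n : ℕ) : ℝ) ^ 2) atTop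
    (𝓝 (π ^ 2 / 6)) := by
  have h : HasSum (fun i : ℕ => (1 : ℝ) / ((i + 1 : ℕ) : ℝ) ^ 2) (π ^ 2 / 6) := by
    have := (hasSum_nat_add_iff' (f := fun n : ℕ => (1 : ℝ) / (n : ℝ) ^ 2) 1).mpr hasSum_zeta_two
    simpa using this
  have := h.tendsto_sum_nat
  apply this.congr fun m => ?_
  rw [sum_Icc_one]

lemma Icc_inter_Icc_nat (p q : ℕ) : Icc 1 p ∩ Icc 1 q = Icc 1 (min p q) := by
  ext n
  simp only [Finset.mem_inter, Finset.mem_Icc, le_min_iff]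
  omega

lemma rect_eq (p q : ℕ) :
    (∑ n₁ ∈ Icc 1 p, ∑ n₂ ∈ Icc 1 q,
        if n₁ ≠ n₂ then (-1 : ℝ) ^ (n₁ + n₂) / ((n₁ : ℝ) * n₂) else 0) =
      (∑ n ∈ Icc 1 p, (-1 : ℝ) ^ n / n) * (∑ n ∈ Icc 1 q, (-1 : ℝ) ^ n / n) -
        ∑ n ∈ Icc 1 (min p q), 1 / ((n : ℕ) : ℝ) ^ 2 := by
  have hterm : ∀ n₁ n₂ : ℕ,
      (if n₁ ≠ n₂ then (-1 : ℝ) ^ (n₁ + n₂) / ((n₁ : ℝ) * n₂) else 0) =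
        ((-1 : ℝ) ^ n₁ / n₁) * ((-1 : ℝ) ^ n₂ / n₂) -
          (if n₂ = n₁ then ((-1 : ℝ) ^ n₁ / n₁) * ((-1 : ℝ) ^ n₂ / n₂) else 0) := by
    intro n₁ n₂
    by_cases h : n₁ = n₂
    · simp [h]
    · rw [if_pos h, if_neg (Ne.symm h), pow_add, div_mul_div_comm, sub_zero]
  simp_rw [hterm, Finset.sum_sub_distrib, Finset.sum_ite_eq' (Icc 1 q)]
  rw [← Finset.sum_mul_sum]
  congr 1
  rw [Finset.sum_ite_mem, Icc_inter_Icc_nat]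
  refine Finset.sum_congr rfl fun n hn => ?_
  have hn1 : (n : ℝ) ≠ 0 := Nat.cast_ne_zero.mpr (by simp at hn; omega)
  rw [div_mul_div_comm, ← pow_add, ← two_mul, pow_mul]
  simp [hn1]
  ring

lemma tendsto_fst' : Tendsto (fun pq : ℕ × ℕ => pq.1) atTop atTop := by
  rw [← prod_atTop_atTop_eq]; exact tendsto_fst

lemma tendsto_snd' : Tendsto (fun pq : ℕ × ℕ => pq.2) atTop atTop := by
  rw [← prod_atTop_atTop_eq]; exact tendsto_snd

lemma tendsto_min' : Tendsto (fun pq : ℕ × ℕ => min pq.1 pq.2) atTop atTop := by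
  rw [← prod_atTop_atTop_eq]
  rw [tendsto_atTop]
  intro b
  filter_upwards [(eventually_ge_atTop b).prod_inl atTop,
    (eventually_ge_atTop b).prod_inr atTop] with x h1 h2
  exact le_min h1 h2

set_option maxHeartbeats 1000000 in
/-- The double series `Σ_{n₁ ≠ n₂} (−1)^{n₁+n₂}/(n₁ n₂)` over distinct positive integers,
summed in Pringsheim's sense (limit of rectangular partial sums), converges to
`(log 2)² − π²/6`. -/
theorem stmt_19 :
    Tendsto (fun pq : ℕ × ℕ => ∑ n₁ ∈ Icc 1 pq.1, ∑ n₂ ∈ Icc 1 pq.2,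
        if n₁ ≠ n₂ then (-1 : ℝ) ^ (n₁ + n₂) / ((n₁ : ℝ) * n₂) else 0)
      atTop (nhds ((Real.log 2) ^ 2 - π ^ 2 / 6)) := by
  have h := ((tendsto_A.comp tendsto_fst').mul (tendsto_A.comp tendsto_snd')).sub
    (tendsto_D.comp tendsto_min')
  have heq : (-Real.log 2) * (-Real.log 2) - π ^ 2 / 6 = (Real.log 2) ^ 2 - π ^ 2 / 6 := by
    ring
  rw [heq] at h
  have h2 : Tendsto (fun pq : ℕ × ℕ =>
      (∑ n ∈ Icc 1 pq.1, (-1 : ℝ) ^ n / n) * (∑ n ∈ Icc 1 pq.2, (-1 : ℝ) ^ n / n) -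
        ∑ n ∈ Icc 1 (min pq.1 pq.2), 1 / ((n : ℕ) : ℝ) ^ 2) atTop
      (𝓝 ((Real.log 2) ^ 2 - π ^ 2 / 6)) := h
  exact h2.congr fun pq => (rect_eq pq.1 pq.2).symm
end
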